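/- arXiv:2604.20426 — 8 statements merged into one kernel-verified Lean document; each statement's English description precedes it below -/
import Mathlib

section
/- Let n ≥ 2 be an integer and let a_1, …, a_n be real numbers satisfying a_1 + a_n ≥ 2. Then 2·∑_{i=1}^{n} a_i² − 2·∑_{i=1}^{n-1} a_i·a_{i+1} ≥ 2. -/
lemma duval_key (a : ℕ → ℝ) : ∀ n, 2 ≤ n →
    2 * ∑ i ∈ Finset.Icc 1 n, (a i) ^ 2 -
      2 * ∑ i ∈ Finset.Icc 1 (n - 1), a i * a (i + 1) =
    (a 1) ^ 2 + (a n) ^ 2 + ∑ i ∈ Finset.Icc 1 (n - 1), (a i - a (i + 1)) ^ 2 := by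
  intro n hn
  induction n, hn using Nat.le_induction with
  | base => simp [Finset.sum_Icc_succ_top]; ring
  | succ n hn ih =>
    have h1 : 1 ≤ n := le_trans (by norm_num) hn
    have e1 : (n + 1) - 1 = n := by omega
    have e2 : n - 1 + 1 = n := by omega
    rw [e1, Finset.sum_Icc_succ_top (by omega : 1 ≤ n + 1) (fun i => (a i)^2),
        ← e2, Finset.sum_Icc_succ_top (by omega : 1 ≤ n - 1 + 1) (fun i => a i * a (i+1)),
        Finset.sum_Icc_succ_top (by omega : 1 ≤ n - 1 + 1) (fun i => (a i - a (i+1))^2), e2]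
    rw [e2] at *
    nlinarith [ih]

/-- The key inequality in the proof of the lemma on Du Val singularities, for a
singular point of type `Aₙ`:  if `a₁ + aₙ ≥ 2`, then
`2·∑_{i=1}^{n} aᵢ² − 2·∑_{i=1}^{n-1} aᵢ·a_{i+1} ≥ 2`. -/
theorem duval_ineq_A (n : ℕ) (hn : 2 ≤ n) (a : ℕ → ℝ) (h : a 1 + a n ≥ 2) :
    2 * ∑ i ∈ Finset.Icc 1 n, (a i) ^ 2 -
      2 * ∑ i ∈ Finset.Icc 1 (n - 1), a i * a (i + 1) ≥ 2 := by
  rw [duval_key a n hn]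
  have hs : 0 ≤ ∑ i ∈ Finset.Icc 1 (n - 1), (a i - a (i + 1)) ^ 2 :=
    Finset.sum_nonneg fun i _ => sq_nonneg _
  nlinarith [sq_nonneg (a 1 - a n), sq_nonneg (a 1 + a n)]
end

section
/- Let n ≥ 5 be an integer and let a_1, …, a_n be real numbers with a_{n-1} ≥ 2. Then 2·∑_{i=1}^{n} a_i² − 2a_1a_2 − 2a_1a_3 − 2a_1a_4 − 2·∑_{i=4}^{n-1} a_i·a_{i+1} ≥ 2. -/
lemma duval_Dn_sos (n : ℕ) (hn : 5 ≤ n) (a : ℕ → ℝ) :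
    2 * ∑ i ∈ Finset.Icc 1 n, (a i) ^ 2 - 2 * a 1 * a 2 - 2 * a 1 * a 3 - 2 * a 1 * a 4 -
      2 * ∑ i ∈ Finset.Icc 4 (n - 1), a i * a (i + 1)
    = (a 2 - a 3) ^ 2 + (a 2 + a 3 - a 1) ^ 2 + (a 1 - a 4) ^ 2 +
      (∑ i ∈ Finset.Icc 4 (n - 1), (a i - a (i + 1)) ^ 2) + (a n) ^ 2 := by
  induction n with
  | zero => omega
  | succ m ih =>
    rcases Nat.lt_or_ge m 5 with hm | hm
    · have hm4 : m = 4 := by omega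
      subst hm4
      rw [show Finset.Icc 1 5 = {1,2,3,4,5} from rfl, show (5:ℕ) - 1 = 4 from rfl,
        show Finset.Icc 4 4 = {4} from rfl]
      simp [Finset.sum_insert, Finset.mem_insert]
      ring
    · have e1 : m + 1 - 1 = m := rfl
      have e2 : m - 1 + 1 = m := by omega
      rw [Finset.sum_Icc_succ_top (show 1 ≤ m + 1 by omega), e1,
        ← e2, Finset.sum_Icc_succ_top (show 4 ≤ m - 1 + 1 by omega),
        Finset.sum_Icc_succ_top (show 4 ≤ m - 1 + 1 by omega), e2]
      have := ih hm
      nlinarith [this]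

/-- The key inequality in the proof of the lemma on Du Val singularities, for a
singular point of type `Dₙ`, `n ≥ 5`. -/
theorem duval_ineq_Dn (n : ℕ) (hn : 5 ≤ n) (a : ℕ → ℝ) (h : a (n - 1) ≥ 2) :
    2 * ∑ i ∈ Finset.Icc 1 n, (a i) ^ 2 - 2 * a 1 * a 2 - 2 * a 1 * a 3 - 2 * a 1 * a 4 -
      2 * ∑ i ∈ Finset.Icc 4 (n - 1), a i * a (i + 1) ≥ 2 := by
  rw [duval_Dn_sos n hn a]
  have hmem : n - 1 ∈ Finset.Icc 4 (n - 1) := by simp; omega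
  have hsum : (a (n - 1) - a (n - 1 + 1)) ^ 2 ≤
      ∑ i ∈ Finset.Icc 4 (n - 1), (a i - a (i + 1)) ^ 2 :=
    Finset.single_le_sum (f := fun i => (a i - a (i + 1)) ^ 2)
      (fun i _ => sq_nonneg _) hmem
  have hn1 : n - 1 + 1 = n := by omega
  rw [hn1] at hsum
  nlinarith [sq_nonneg (a 2 - a 3), sq_nonneg (a 2 + a 3 - a 1), sq_nonneg (a 1 - a 4),
    sq_nonneg (a (n - 1) - a n - 1), sq_nonneg (a n - 1)]
end

section
/- Let a_1, …, a_6 be real numbers with a_4 ≥ 2. Then 2(a_1² + a_2² + a_3² + a_4² + a_5² + a_6²) − 2a_1a_2 − 2a_2a_3 − 2a_3a_4 − 2a_3a_5 − 2a_5a_6 ≥ 2. -/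
/-- The key inequality in the proof of the lemma on Du Val singularities, for a
singular point of type `E₆`. -/
theorem duval_ineq_E6 (a₁ a₂ a₃ a₄ a₅ a₆ : ℝ) (h : a₄ ≥ 2) :
    2 * (a₁ ^ 2 + a₂ ^ 2 + a₃ ^ 2 + a₄ ^ 2 + a₅ ^ 2 + a₆ ^ 2) -
      2 * a₁ * a₂ - 2 * a₂ * a₃ - 2 * a₃ * a₄ - 2 * a₃ * a₅ - 2 * a₅ * a₆ ≥ 2 := by
  nlinarith [sq_nonneg (2*(a₁-1) - (a₂-2)), sq_nonneg (3*(a₂-2) - 2*(a₃-3)),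
    sq_nonneg (4*(a₃-3) - 3*(a₄-2) - 3*(a₅-2)), sq_nonneg (5*(a₄-2) - 3*(a₅-2)),
    sq_nonneg (4*(a₅-2) - 5*(a₆-1)), sq_nonneg (a₆-1), h]
end

section
/- Let a_1, …, a_7 be real numbers with a_1 ≥ 2. Then 2(a_1² + a_2² + a_3² + a_4² + a_5² + a_6² + a_7²) − 2a_1a_2 − 2a_2a_3 − 2a_3a_4 − 2a_3a_5 − 2a_5a_6 − 2a_6a_7 ≥ 2. -/
/-- The key inequality in the proof of the lemma on Du Val singularities, for a
singular point of type `E₇`. -/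
theorem duval_ineq_E7 (a₁ a₂ a₃ a₄ a₅ a₆ a₇ : ℝ) (h : a₁ ≥ 2) :
    2 * (a₁ ^ 2 + a₂ ^ 2 + a₃ ^ 2 + a₄ ^ 2 + a₅ ^ 2 + a₆ ^ 2 + a₇ ^ 2) -
      2 * a₁ * a₂ - 2 * a₂ * a₃ - 2 * a₃ * a₄ - 2 * a₃ * a₅ - 2 * a₅ * a₆ - 2 * a₆ * a₇ ≥ 2 := by
  nlinarith [sq_nonneg (2*(a₁-2) - (a₂-3)), sq_nonneg (3*(a₂-3) - 2*(a₃-4)),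
    sq_nonneg (4*(a₃-4) - 3*(a₄-2) - 3*(a₅-3)), sq_nonneg (5*(a₄-2) - 3*(a₅-3)),
    sq_nonneg (4*(a₅-3) - 5*(a₆-2)), sq_nonneg (3*(a₆-2) - 4*(a₇-1)), sq_nonneg (a₇-1), h]
end

section
/- Let a_1, …, a_8 be real numbers with a_8 ≥ 2. Then 2(a_1² + a_2² + a_3² + a_4² + a_5² + a_6² + a_7² + a_8²) − 2a_1a_2 − 2a_2a_3 − 2a_3a_4 − 2a_3a_5 − 2a_5a_6 − 2a_6a_7 − 2a_7a_8 ≥ 2. -/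
/-- The key inequality in the proof of the lemma on Du Val singularities, for a
singular point of type `E₈`. -/
theorem duval_ineq_E8 (a₁ a₂ a₃ a₄ a₅ a₆ a₇ a₈ : ℝ) (h : a₈ ≥ 2) :
    2 * (a₁ ^ 2 + a₂ ^ 2 + a₃ ^ 2 + a₄ ^ 2 + a₅ ^ 2 + a₆ ^ 2 + a₇ ^ 2 + a₈ ^ 2) -
      2 * a₁ * a₂ - 2 * a₂ * a₃ - 2 * a₃ * a₄ - 2 * a₃ * a₅ - 2 * a₅ * a₆ - 2 * a₆ * a₇ -
      2 * a₇ * a₈ ≥ 2 := by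
  nlinarith [sq_nonneg (2*a₁ - a₂), sq_nonneg (3*a₂ - 2*a₃), sq_nonneg (4*a₃ - 3*a₄ - 3*a₅),
    sq_nonneg (5*a₄ - 3*a₅), sq_nonneg (4*a₅ - 5*a₆), sq_nonneg (3*a₆ - 4*a₇),
    sq_nonneg (2*a₇ - 3*a₈), sq_nonneg (a₈ - 2), h]
end

section
/- Let G be the semidirect product (ZMod 3 × ZMod 3) ⋊ ZMod 4, where the generator 1 of ZMod 4 acts by the automorphism (x, y) ↦ (−y, x). Then the index of every subgroup of G lies in the set {1, 2, 4, 6, 9, 12, 18, 36}. Equivalently, every transitive action of G on a set with more than one element has orbit size in {2, 4, 6, 9, 12, 18, 36}. -/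
/-- The order-4 automorphism `(x, y) ↦ (-y, x)` of `ZMod 3 × ZMod 3`,
viewed as an automorphism of the corresponding multiplicative group. -/
def rotAut : MulAut (Multiplicative (ZMod 3 × ZMod 3)) where
  toFun p := Multiplicative.ofAdd (-(Multiplicative.toAdd p).2, (Multiplicative.toAdd p).1)
  invFun p := Multiplicative.ofAdd ((Multiplicative.toAdd p).2, -(Multiplicative.toAdd p).1)
  left_inv p := by simp
  right_inv p := by simp
  map_mul' p q := by
    simp only [toAdd_mul, Prod.fst_add, Prod.snd_add, ← ofAdd_add]
    congr 1
    simp [Prod.ext_iff, neg_add, add_comm]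

/-- The homomorphism `ZMod n → M` sending `1` to a fixed element `ψ` with `ψ ^ n = 1`. -/
def zmodPowHom (n : ℕ) [NeZero n] {M : Type*} [Monoid M] (ψ : M) (h : ψ ^ n = 1) :
    Multiplicative (ZMod n) →* M where
  toFun k := ψ ^ (Multiplicative.toAdd k).val
  map_one' := by simp
  map_mul' a b := by
    have key : ∀ m : ℕ, ψ ^ (m % n) = ψ ^ m := by
      intro m
      conv_rhs => rw [← Nat.mod_add_div m n]
      rw [pow_add, pow_mul, h, one_pow, mul_one]
    show ψ ^ (Multiplicative.toAdd (a * b)).val = _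
    rw [toAdd_mul, ZMod.val_add, key, pow_add]

lemma rotAut_pow_four : rotAut ^ 4 = 1 := by
  ext p : 1
  rw [pow_succ, pow_succ, pow_succ, pow_one]
  simp only [MulAut.mul_apply, MulAut.one_apply]
  simp [rotAut]

/-- The group `(ZMod 3 × ZMod 3) ⋊ ZMod 4`, where the generator `1` of `ZMod 4`
acts by the automorphism `(x, y) ↦ (-y, x)`; this is the group with GAP ID `[36,9]`. -/
abbrev G369 : Type :=
  SemidirectProduct (Multiplicative (ZMod 3 × ZMod 3)) (Multiplicative (ZMod 4))
    (zmodPowHom 4 rotAut rotAut_pow_four)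

/-!
Every index divides `36`, so only index `3` has to be excluded. The normal core `N` of a
subgroup of index `3` has index dividing `3! = 6` and divisible by `3`, so `3 ∣ |N|`.
Elements of order `3` lie in the translation subgroup `C₃²`, so `N ∩ C₃²` is a nontrivial
subgroup of `C₃²` invariant under `(x, y) ↦ (-y, x)`. This rotation fixes no line of `𝔽₃²`
(`-1` is not a square mod `3`), hence `C₃² ≤ N` and `9 ∣ |N|`, contradicting `|N| ∈ {6, 12}`.
-/

open SemidirectProduct

instance SemidirectProduct.instFinite {N G : Type*} [Group N] [Group G] {φ : G →* MulAut N}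
    [Finite N] [Finite G] : Finite (N ⋊[φ] G) :=
  Finite.of_equiv _ equivProd.symm

theorem SemidirectProduct.mem_range_inl_of_coprime_orderOf {N G : Type*} [Group N] [Group G]
    {φ : G →* MulAut N} {x : N ⋊[φ] G} (hx : (orderOf x).Coprime (Nat.card G)) :
    x ∈ (inl : N →* N ⋊[φ] G).range := by
  rw [range_inl_eq_ker_rightHom, MonoidHom.mem_ker, ← orderOf_eq_one_iff]
  exact Nat.eq_one_of_dvd_coprimes hx (orderOf_map_dvd _ x) (orderOf_dvd_natCard _)

theorem Subgroup.index_normalCore_dvd_factorial {G : Type*} [Group G] (H : Subgroup G)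
    [H.FiniteIndex] : H.normalCore.index ∣ H.index.factorial := by
  rw [normalCore_eq_ker, index_ker, index_eq_card, ← Nat.card_perm]
  exact card_subgroup_dvd_card (MulAction.toPermHom G (G ⧸ H)).range

namespace G369

local notation "V" => Multiplicative (ZMod 3 × ZMod 3)

lemma card_eq : Nat.card G369 = 36 := by
  simp

lemma eq_zero_of_smul_eq_rotate :
    ∀ (c : ZMod 3) (a : ZMod 3 × ZMod 3), c • a = (-a.2, a.1) → a = 0 := by
  decide

lemma eq_one_of_rotAut_mem_zpowers {n : V} (h : rotAut n ∈ Subgroup.zpowers n) : n = 1 := by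
  obtain ⟨k, hk⟩ := Subgroup.mem_zpowers_iff.mp h
  refine Multiplicative.toAdd.injective (eq_zero_of_smul_eq_rotate k n.toAdd ?_)
  rw [Int.cast_smul_eq_zsmul, ← toAdd_zpow, hk]
  rfl

lemma eq_top_of_rotAut_mem {S : Subgroup V} (hS : ∀ n ∈ S, rotAut n ∈ S) (hne : S ≠ ⊥) :
    S = ⊤ := by
  obtain ⟨⟨n, hn⟩, hn1⟩ := Subgroup.ne_bot_iff_exists_ne_one.mp hne
  have hdvd : Nat.card S ∣ 3 ^ 2 := by
    simpa [Nat.card_prod, Nat.card_zmod] using S.card_subgroup_dvd_card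
  obtain ⟨i, hi, hcard⟩ := (Nat.dvd_prime_pow Nat.prime_three).mp hdvd
  interval_cases i
  · exact absurd (Subgroup.card_eq_one.mp hcard) hne
  · have hgen := zpowers_eq_top_of_prime_card (hcard.trans (pow_one 3)) hn1
    have hrot : (⟨rotAut n, hS n hn⟩ : S) ∈ Subgroup.zpowers ⟨n, hn⟩ := hgen ▸ Subgroup.mem_top _
    have hrot' := Subgroup.mem_map_of_mem S.subtype hrot
    rw [MonoidHom.map_zpowers] at hrot'
    exact absurd (Subtype.ext (eq_one_of_rotAut_mem_zpowers hrot')) hn1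
  · exact Subgroup.eq_top_of_card_eq _ (by simpa [Nat.card_prod, Nat.card_zmod] using hcard)

lemma zmodPowHom_ofAdd_one :
    zmodPowHom 4 rotAut rotAut_pow_four (Multiplicative.ofAdd 1) = rotAut :=
  pow_one rotAut

lemma range_inl_le_of_three_dvd_card (N : Subgroup G369) [N.Normal] (h3 : 3 ∣ Nat.card N) :
    (inl : V →* G369).range ≤ N := by
  obtain ⟨x, hx⟩ := exists_prime_orderOf_dvd_card' (G := N) 3 h3
  obtain ⟨n, hn⟩ : (x : G369) ∈ (inl : V →* G369).range :=
    mem_range_inl_of_coprime_orderOf (by norm_num [Subgroup.orderOf_coe, hx, Nat.card_zmod])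
  have hcomap : N.comap inl = ⊤ := by
    refine eq_top_of_rotAut_mem (fun m hm => ?_) ?_
    · have := ‹N.Normal›.conj_mem _ hm (inr (Multiplicative.ofAdd 1))
      rwa [← map_inv, ← inl_aut, zmodPowHom_ofAdd_one] at this
    · refine Subgroup.ne_bot_iff_exists_ne_one.mpr ⟨⟨n, by simp [hn]⟩, fun h1 => ?_⟩
      have : (x : G369) = 1 := by rw [← hn, show n = 1 from congrArg Subtype.val h1, map_one]
      rw [← Subgroup.orderOf_coe, this, orderOf_one] at hx
      exact absurd hx (by norm_num)
  rw [MonoidHom.range_eq_map, ← hcomap]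
  exact Subgroup.map_comap_le _ _

lemma index_ne_three (H : Subgroup G369) : H.index ≠ 3 := by
  intro h3
  set N := H.normalCore
  have hN6 : N.index ∣ 6 := by
    simpa [h3, Nat.factorial] using H.index_normalCore_dvd_factorial
  have h3N : 3 ∣ N.index := by
    have := Subgroup.index_dvd_of_le H.normalCore_le
    rwa [h3] at this
  have hmul : Nat.card N * N.index = 36 := by rw [N.card_mul_index, card_eq]
  have hidx : N.index = 3 ∨ N.index = 6 := by
    have := Nat.le_of_dvd (by norm_num) hN6
    interval_cases N.index <;> omega
  have hcardN : Nat.card N = 12 ∨ Nat.card N = 6 := by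
    rcases hidx with h | h <;> rw [h] at hmul <;> omega
  have h9 : 9 ∣ Nat.card N := by
    have := Subgroup.card_dvd_of_le (range_inl_le_of_three_dvd_card N (by omega))
    rwa [MonoidHom.range_eq_map, Subgroup.card_map_of_injective inl_injective,
      Subgroup.card_top, Nat.card_eq_fintype_card] at this
  omega

end G369

/-- The index of every subgroup of `(ZMod 3 × ZMod 3) ⋊ ZMod 4` (GAP ID `[36,9]`)
lies in `{1, 2, 4, 6, 9, 12, 18, 36}`. -/
theorem index_subgroup_G369 (H : Subgroup G369) :
    H.index ∈ ({1, 2, 4, 6, 9, 12, 18, 36} : Set ℕ) := by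
  have hdvd : H.index ∣ 36 := G369.card_eq ▸ H.index_dvd_card
  have hle : H.index ≤ 36 := Nat.le_of_dvd (by norm_num) hdvd
  have hne3 := G369.index_ne_three H
  simp only [Set.mem_insert_iff, Set.mem_singleton_iff]
  interval_cases H.index <;> omega
end

section
/- Let V be the additive group of functions v : Fin 5 → ZMod 3 whose coordinates sum to zero (an elementary abelian group of order 81), and let G be the semidirect product V ⋊ ZMod 5, where the generator 1 of ZMod 5 acts by cyclically shifting the coordinates: (σ·v)(i) = v(i+1). Then every nontrivial proper subgroup of G is isomorphic to one of the following: ZMod 5, ZMod 3, (ZMod 3)², (ZMod 3)³, or (ZMod 3)⁴. -/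
/-- The homomorphism summing the coordinates of a vector in `Fin 5 → ZMod 3`. -/
def sumHom : (Fin 5 → ZMod 3) →+ ZMod 3 where
  toFun v := ∑ i, v i
  map_zero' := by simp
  map_add' a b := by simp [Finset.sum_add_distrib]

/-- The cyclic-shift automorphism `v ↦ (i ↦ v (i + 1))` of the group of vectors in
`Fin 5 → ZMod 3` with coordinate sum zero. -/
def shiftAdd : sumHom.ker ≃+ sumHom.ker where
  toFun v := ⟨fun i => (v : Fin 5 → ZMod 3) (i + 1), by
    have hv := v.2
    simp only [AddMonoidHom.mem_ker, sumHom, AddMonoidHom.coe_mk, ZeroHom.coe_mk] at hv ⊢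
    rw [← hv]
    exact Fintype.sum_equiv (Equiv.addRight 1) _ _ (fun i => rfl)⟩
  invFun v := ⟨fun i => (v : Fin 5 → ZMod 3) (i - 1), by
    have hv := v.2
    simp only [AddMonoidHom.mem_ker, sumHom, AddMonoidHom.coe_mk, ZeroHom.coe_mk] at hv ⊢
    rw [← hv]
    exact Fintype.sum_equiv (Equiv.subRight 1) _ _ (fun i => rfl)⟩
  left_inv v := by
    ext i
    show (v : Fin 5 → ZMod 3) (i - 1 + 1) = (v : Fin 5 → ZMod 3) i
    rw [sub_add_cancel]
  right_inv v := by
    ext i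
    show (v : Fin 5 → ZMod 3) (i + 1 - 1) = (v : Fin 5 → ZMod 3) i
    rw [add_sub_cancel_right]
  map_add' v w := rfl

lemma shiftAdd_pow_five : 5 • (shiftAdd : AddAut sumHom.ker) = 0 := by
  ext v i
  rw [succ_nsmul, succ_nsmul, succ_nsmul, succ_nsmul, one_nsmul]
  simp only [AddAut.add_apply, AddAut.zero_apply]
  show (v : Fin 5 → ZMod 3) (i + 1 + 1 + 1 + 1 + 1) = (v : Fin 5 → ZMod 3) i
  have h5 : ∀ j : Fin 5, j + 1 + 1 + 1 + 1 + 1 = j := by decide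
  rw [h5]

lemma shiftAdd_iter (x : sumHom.ker) :
    shiftAdd (shiftAdd (shiftAdd (shiftAdd (shiftAdd x)))) = x := by
  ext i
  show (x : Fin 5 → ZMod 3) (i + 1 + 1 + 1 + 1 + 1) = (x : Fin 5 → ZMod 3) i
  have h5 : ∀ j : Fin 5, j + 1 + 1 + 1 + 1 + 1 = j := by decide
  rw [h5]

/-- The cyclic-shift automorphism, as an automorphism of the multiplicative form of the
group of vectors in `Fin 5 → ZMod 3` with coordinate sum zero. -/
def shiftMul : MulAut (Multiplicative sumHom.ker) where
  toFun v := Multiplicative.ofAdd (shiftAdd (Multiplicative.toAdd v))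
  invFun v := Multiplicative.ofAdd (shiftAdd.symm (Multiplicative.toAdd v))
  left_inv v := by simp
  right_inv v := by simp
  map_mul' v w := by
    simp only [toAdd_mul, map_add, ← ofAdd_add]

lemma shiftMul_pow_five : shiftMul ^ 5 = 1 := by
  ext v : 1
  rw [pow_succ, pow_succ, pow_succ, pow_succ, pow_one]
  simp only [MulAut.mul_apply, MulAut.one_apply]
  show Multiplicative.ofAdd
      (shiftAdd (shiftAdd (shiftAdd (shiftAdd (shiftAdd (Multiplicative.toAdd v)))))) = v
  rw [shiftAdd_iter, ofAdd_toAdd]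

/-- The group `V ⋊ ZMod 5` of order 405 (GAP ID `[405,15]`), where `V` is the group of
vectors in `Fin 5 → ZMod 3` with coordinate sum zero and the generator `1` of `ZMod 5`
acts by the cyclic shift `(σ·v) i = v (i + 1)`. -/
abbrev G405 : Type :=
  SemidirectProduct (Multiplicative sumHom.ker) (Multiplicative (ZMod 5))
    (zmodPowHom 5 shiftMul shiftMul_pow_five)


/-! The kernel `V` of the projection `G405 → C₅` is elementary abelian of order `3⁴`, so a
subgroup of `G405` inside `V` is `(ZMod 3)ᵈ` with `1 ≤ d ≤ 4`. For a subgroup `H` not inside `V`,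
conjugation by an element of `H \ V` acts on `K = H ∩ V` as a nontrivial power of the shift, so
`K` is invariant under all of `C₅`. The shift fixes no nonzero vector of `V`, so the `5`-group
`C₅` acts on `K` with the single fixed point `0`, whence `|K| ≡ 1 [MOD 5]`; with `|K| ∣ 3⁴` this
forces `K = 0`, and then `H ≅ C₅`, or `K = V`, and then `H` is everything. -/

open SemidirectProduct

namespace SemidirectProduct

variable {N G : Type*} [Group G]

theorem mul_inl_mul_inv [CommGroup N] {φ : G →* MulAut N} (g : N ⋊[φ] G) (n : N) :
    g * inl n * g⁻¹ = inl (φ g.right n) := by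
  ext
  · simp [mul_left, inv_left]
  · simp

variable [Group N] {φ : G →* MulAut N}

theorem injective_rightHom_comp_subtype {H : Subgroup (N ⋊[φ] G)} (hH : H.comap inl = ⊥) :
    Function.Injective (rightHom.comp H.subtype) := by
  refine (injective_iff_map_eq_one _).2 fun x hx => ?_
  obtain ⟨n, hn⟩ : (x : N ⋊[φ] G) ∈ (inl : N →* N ⋊[φ] G).range := by
    rwa [range_inl_eq_ker_rightHom]
  have hn1 : n = 1 := by
    rw [← Subgroup.mem_bot, ← hH, Subgroup.mem_comap, hn]
    exact x.2
  exact Subtype.ext (by rw [← hn, hn1, map_one]; rfl)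

theorem eq_top_of_comap_inl_eq_top {H : Subgroup (N ⋊[φ] G)} (hN : H.comap inl = ⊤)
    (hG : H.map rightHom = ⊤) : H = ⊤ := by
  have hker : (rightHom : N ⋊[φ] G →* G).ker ≤ H := by
    rw [← range_inl_eq_ker_rightHom, MonoidHom.range_eq_map, Subgroup.map_le_iff_le_comap, hN]
  rw [← Subgroup.comap_map_eq_self hker, hG, Subgroup.comap_top]

end SemidirectProduct

theorem IsPGroup.card_subgroup_modEq_one {p : ℕ} [Fact p.Prime] {P A : Type*} [Group P]
    [Group A] [Finite A] (hP : IsPGroup p P) (ρ : P →* MulAut A)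
    (hfix : ∀ a : A, (∀ g, ρ g a = a) → a = 1) (K : Subgroup A) (hK : ∀ g, ∀ a ∈ K, ρ g a ∈ K) :
    Nat.card K ≡ 1 [MOD p] := by
  let _ : MulAction P K :=
    { smul g k := ⟨ρ g k, hK g k k.2⟩
      one_smul k := Subtype.ext (by change ρ 1 k = k; simp)
      mul_smul g h k := Subtype.ext (by change ρ (g * h) k = ρ g (ρ h k); simp) }
  have hfixK : MulAction.fixedPoints P K = {1} := by
    ext k
    simp only [MulAction.mem_fixedPoints, Set.mem_singleton_iff]
    refine ⟨fun hk => Subtype.ext (hfix k fun g => congrArg Subtype.val (hk g)), ?_⟩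
    rintro rfl g
    exact Subtype.ext (map_one (ρ g))
  simpa [hfixK] using hP.card_modEq_card_fixedPoints K

theorem ZMod.nonempty_addEquiv_of_card_eq {p : ℕ} [Fact p.Prime] {A M : Type*} [AddCommGroup A]
    [Module (ZMod p) A] [Finite A] [AddCommGroup M] [Module (ZMod p) M] [Finite M]
    (hcard : Nat.card A = Nat.card M) : Nonempty (A ≃+ M) := by
  have hfinrank : Module.finrank (ZMod p) A = Module.finrank (ZMod p) M := by
    apply Nat.pow_right_injective (Fact.out : p.Prime).two_le
    rwa [Module.natCard_eq_pow_finrank (K := ZMod p) (V := A),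
      Module.natCard_eq_pow_finrank (K := ZMod p) (V := M), Nat.card_zmod] at hcard
  obtain ⟨e⟩ := FiniteDimensional.nonempty_linearEquiv_iff_finrank_eq.2 hfinrank
  exact ⟨e.toAddEquiv⟩

theorem nonempty_mulEquiv_multiplicative_of_card_eq {p : ℕ} [Fact p.Prime] {G M : Type*}
    [CommGroup G] [Finite G] [AddCommGroup M] [Module (ZMod p) M] [Finite M]
    (hG : ∀ g : G, g ^ p = 1) (hcard : Nat.card G = Nat.card M) :
    Nonempty (G ≃* Multiplicative M) := by
  let _ : Module (ZMod p) (Additive G) := AddCommGroup.zmodModule fun g => hG g.toMul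
  obtain ⟨e⟩ := ZMod.nonempty_addEquiv_of_card_eq (p := p) (A := Additive G) hcard
  exact ⟨AddEquiv.toMultiplicativeRight e⟩

theorem card_multiplicative_sumHom_ker : Nat.card (Multiplicative sumHom.ker) = 3 ^ 4 := by
  rw [Nat.card_eq_fintype_card]
  decide

theorem pow_three_eq_one_of_sumHom_ker (x : Multiplicative sumHom.ker) : x ^ 3 = 1 := by
  apply Multiplicative.toAdd.injective
  ext i
  simp [show (3 : ZMod 3) = 0 from rfl]

theorem eq_zero_of_shiftAdd_eq_self {v : sumHom.ker} (hv : shiftAdd v = v) : v = 0 := by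
  have hvi : ∀ i, v.1 (i + 1) = v.1 i := fun i => congrFun (congrArg Subtype.val hv) i
  have h1 : v.1 1 = v.1 0 := hvi 0
  have h2 : v.1 2 = v.1 1 := hvi 1
  have h3 : v.1 3 = v.1 2 := hvi 2
  have h4 : v.1 4 = v.1 3 := hvi 3
  have hsum : ∑ i, v.1 i = 0 := v.2
  rw [Fin.sum_univ_five, h4, h3, h2, h1] at hsum
  have h0 : v.1 0 = 0 := by
    generalize v.1 0 = c at hsum
    revert c
    decide
  ext i
  fin_cases i <;> simp [h0, h1, h2, h3, h4]

theorem exists_card_subgroup_sumHom_ker_eq_three_pow (K : Subgroup (Multiplicative sumHom.ker)) :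
    ∃ k ≤ 4, Nat.card K = 3 ^ k :=
  (Nat.dvd_prime_pow Nat.prime_three).1 (card_multiplicative_sumHom_ker ▸ K.card_subgroup_dvd_card)

theorem Subgroup.eq_bot_or_eq_top_of_shift_invariant (K : Subgroup (Multiplicative sumHom.ker))
    {r : Multiplicative (ZMod 5)} (hr : r ≠ 1)
    (hK : ∀ x ∈ K, zmodPowHom 5 shiftMul shiftMul_pow_five r x ∈ K) : K = ⊥ ∨ K = ⊤ := by
  have : Fact (Nat.Prime 5) := ⟨Nat.prime_five⟩
  have hcard5 : Nat.card (Multiplicative (ZMod 5)) = 5 := Nat.card_zmod 5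
  have hKall : ∀ g, ∀ x ∈ K, zmodPowHom 5 shiftMul shiftMul_pow_five g x ∈ K := by
    intro g
    obtain ⟨n, rfl : r ^ n = g⟩ := mem_powers_of_prime_card hcard5 hr (g' := g)
    induction n with
    | zero => simp
    | succ n ih =>
      intro x hx
      rw [pow_succ, map_mul, MulAut.mul_apply]
      exact ih _ (hK x hx)
  have hfix : ∀ x, (∀ g, zmodPowHom 5 shiftMul shiftMul_pow_five g x = x) → x = 1 :=
    fun x hx => eq_zero_of_shiftAdd_eq_self (congrArg Multiplicative.toAdd (hx (.ofAdd 1)))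
  have hmod := (IsPGroup.of_card (hcard5.trans (pow_one 5).symm)).card_subgroup_modEq_one _
    hfix K hKall
  obtain ⟨k, hk, hKk⟩ := exists_card_subgroup_sumHom_ker_eq_three_pow K
  rw [hKk] at hmod
  interval_cases k
  · exact .inl (Subgroup.eq_bot_of_card_eq K hKk)
  all_goals first
    | exact absurd hmod (by decide)
    | exact .inr (Subgroup.eq_top_of_card_eq K (hKk.trans card_multiplicative_sumHom_ker.symm))

theorem Subgroup.nonempty_mulEquiv_of_sumHom_ker (K : Subgroup (Multiplicative sumHom.ker))
    (hK : K ≠ ⊥) :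
    Nonempty (K ≃* Multiplicative (ZMod 3)) ∨
    Nonempty (K ≃* Multiplicative (ZMod 3 × ZMod 3)) ∨
    Nonempty (K ≃* Multiplicative (ZMod 3 × ZMod 3 × ZMod 3)) ∨
    Nonempty (K ≃* Multiplicative (ZMod 3 × ZMod 3 × ZMod 3 × ZMod 3)) := by
  have : Fact (Nat.Prime 3) := ⟨Nat.prime_three⟩
  have hexp : ∀ x : K, x ^ 3 = 1 := fun x => Subtype.ext (pow_three_eq_one_of_sumHom_ker x)
  obtain ⟨k, hk, hKk⟩ := exists_card_subgroup_sumHom_ker_eq_three_pow K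
  interval_cases k
  · exact absurd (Subgroup.eq_bot_of_card_eq K hKk) hK
  · exact .inl (nonempty_mulEquiv_multiplicative_of_card_eq hexp (by simp [hKk]))
  · exact .inr (.inl (nonempty_mulEquiv_multiplicative_of_card_eq hexp (by simp [hKk])))
  · exact .inr (.inr (.inl (nonempty_mulEquiv_multiplicative_of_card_eq hexp (by simp [hKk]))))
  · exact .inr (.inr (.inr (nonempty_mulEquiv_multiplicative_of_card_eq hexp (by simp [hKk]))))

/-- Every nontrivial proper subgroup of the group `C₃⁴ ⋊ C₅` of order 405
(GAP ID `[405,15]`) is isomorphic to `ZMod 5`, `ZMod 3`, `(ZMod 3)²`, `(ZMod 3)³`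
or `(ZMod 3)⁴`. -/
theorem subgroups_of_G405 (H : Subgroup G405) (hbot : H ≠ ⊥) (htop : H ≠ ⊤) :
    Nonempty (H ≃* Multiplicative (ZMod 5)) ∨
    Nonempty (H ≃* Multiplicative (ZMod 3)) ∨
    Nonempty (H ≃* Multiplicative (ZMod 3 × ZMod 3)) ∨
    Nonempty (H ≃* Multiplicative (ZMod 3 × ZMod 3 × ZMod 3)) ∨
    Nonempty (H ≃* Multiplicative (ZMod 3 × ZMod 3 × ZMod 3 × ZMod 3)) := by
  have : Fact (Nat.Prime 5) := ⟨Nat.prime_five⟩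
  have hcard5 : Nat.card (Multiplicative (ZMod 5)) = 5 := Nat.card_zmod 5
  set K : Subgroup (Multiplicative sumHom.ker) := H.comap inl
  by_cases hHV : H ≤ rightHom.ker
  · have hHK : H = K.map inl :=
      (Subgroup.map_comap_eq_self (by rwa [range_inl_eq_ker_rightHom])).symm
    have hK : K ≠ ⊥ := fun h => hbot (by rw [hHK, h, Subgroup.map_bot])
    let e : K ≃* H := (K.equivMapOfInjective _ inl_injective).trans (.subgroupCongr hHK.symm)
    rcases K.nonempty_mulEquiv_of_sumHom_ker hK with ⟨⟨f⟩⟩ | ⟨⟨f⟩⟩ | ⟨⟨f⟩⟩ | ⟨⟨f⟩⟩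
    exacts [.inr (.inl ⟨e.symm.trans f⟩), .inr (.inr (.inl ⟨e.symm.trans f⟩)),
      .inr (.inr (.inr (.inl ⟨e.symm.trans f⟩))), .inr (.inr (.inr (.inr ⟨e.symm.trans f⟩)))]
  · obtain ⟨h₀, hh₀, hr₀⟩ := SetLike.not_le_iff_exists.1 hHV
    have hK : ∀ x ∈ K, zmodPowHom 5 shiftMul shiftMul_pow_five h₀.right x ∈ K := fun x hx => by
      have := H.mul_mem (H.mul_mem hh₀ hx) (H.inv_mem hh₀)
      rwa [mul_inl_mul_inv] at this
    rcases K.eq_bot_or_eq_top_of_shift_invariant hr₀ hK with hKbot | hKtop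
    · have hcardH : Nat.card H = 5 := by
        have := Subgroup.card_dvd_of_injective _ (injective_rightHom_comp_subtype hKbot)
        rcases (Nat.dvd_prime Nat.prime_five).1 (hcard5 ▸ this) with h | h
        exacts [absurd (Subgroup.eq_bot_of_card_eq H h) hbot, h]
      exact .inl ⟨mulEquivOfPrimeCardEq hcardH hcard5⟩
    · refine absurd (eq_top_of_comap_inl_eq_top hKtop ?_) htop
      rw [eq_top_iff, ← zpowers_eq_top_of_prime_card hcard5 hr₀, Subgroup.zpowers_le]
      exact ⟨h₀, hh₀, rfl⟩
end

section
/- Let G be the direct product of two copies of the symmetric group on three letters, G = Perm(Fin 3) × Perm(Fin 3). Then there is no normal subgroup H of G such that H is abelian and the quotient group G/H is cyclic of order 2, 3, 4, or 6. -/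
/-!
If `G ⧸ H` is abelian then `H` contains the commutator subgroup `A₃ × A₃` of `S₃ × S₃`, and if
moreover `H` is abelian it centralizes `A₃ × A₃`. Since a 3-cycle of `S₃` commutes only with
even permutations, `H` lies in the kernel of `(sign, sign) : S₃ × S₃ → ℤˣ × ℤˣ`. This character
is onto, so it makes the Klein four-group `ℤˣ × ℤˣ` a quotient of `G ⧸ H`, which therefore
cannot be cyclic.
-/

open Equiv Equiv.Perm Subgroup
open scoped commutatorElement

theorem Subgroup.le_centralizer_commutator {G : Type*} [Group G] (H : Subgroup G) [H.Normal]
    [IsMulCommutative H] [IsMulCommutative (G ⧸ H)] :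
    H ≤ centralizer (_root_.commutator G : Set G) :=
  H.le_centralizer.trans <|
    centralizer_le (Normal.quotient_commutative_iff_commutator_le.mp ‹_›)

theorem Equiv.Perm.sign_eq_one_of_commute_commutatorElement_swap (x : Perm (Fin 3))
    (h : Commute ⁅swap (0 : Fin 3) 1, swap 0 2⁆ x) : sign x = 1 := by
  rw [commute_iff_eq] at h
  revert x
  decide

theorem centralizer_commutator_le_ker_sign_prodMap_sign :
    centralizer
        (_root_.commutator (Perm (Fin 3) × Perm (Fin 3)) : Set (Perm (Fin 3) × Perm (Fin 3))) ≤
      (sign.prodMap sign).ker := by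
  intro x hx
  have hcomm (a b : Perm (Fin 3) × Perm (Fin 3)) : Commute ⁅a, b⁆ x :=
    mem_centralizer_iff.mp hx _ (commutator_mem_commutator (mem_top a) (mem_top b))
  exact MonoidHom.mem_ker.mpr <| Prod.ext
    (sign_eq_one_of_commute_commutatorElement_swap _
      (congrArg Prod.fst (hcomm (swap 0 1, 1) (swap 0 2, 1))))
    (sign_eq_one_of_commute_commutatorElement_swap _
      (congrArg Prod.snd (hcomm (1, swap 0 1) (1, swap 0 2))))

theorem not_isCyclic_units_int_prod : ¬ IsCyclic (ℤˣ × ℤˣ) := by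
  simp [Group.isCyclic_prod_iff, Nat.card_eq_fintype_card, Fintype.card_units_int]

/-- The group `S₃ × S₃` has no abelian normal subgroup whose quotient is cyclic of order
`2`, `3`, `4` or `6`. -/
theorem no_abelian_normal_with_small_cyclic_quotient
    (H : Subgroup (Equiv.Perm (Fin 3) × Equiv.Perm (Fin 3))) [H.Normal]
    (habel : ∀ a b : H, a * b = b * a)
    (hcyc : IsCyclic ((Equiv.Perm (Fin 3) × Equiv.Perm (Fin 3)) ⧸ H)) :
    Nat.card ((Equiv.Perm (Fin 3) × Equiv.Perm (Fin 3)) ⧸ H) ∉ ({2, 3, 4, 6} : Set ℕ) := by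
  have : IsMulCommutative H := ⟨⟨habel⟩⟩
  have : IsMulCommutative (_ ⧸ H) := ⟨⟨hcyc.commGroup.mul_comm⟩⟩
  have hker : H ≤ (sign.prodMap sign).ker :=
    H.le_centralizer_commutator.trans centralizer_commutator_le_ker_sign_prodMap_sign
  have hsurj : Function.Surjective (sign.prodMap sign : Perm (Fin 3) × Perm (Fin 3) →* _) := by
    rw [MonoidHom.coe_prodMap]
    exact Prod.map_surjective.mpr ⟨sign_surjective _, sign_surjective _⟩
  exact (not_isCyclic_units_int_prod <|
    isCyclic_of_surjective _ (QuotientGroup.lift_surjective_of_surjective H _ hsurj hker)).elim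
end
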